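/- arXiv:1707.08283 — 2 statements merged into one kernel-verified Lean document; each statement's English description precedes it below -/
import Mathlib

section
/- Let G be a graph on vertex set V and suppose f : ℕ → ℝ is a function with f(0) = f(1) = 1 and such that for all a, b ∈ V with i(a,b) ≥ 2 there exists c ∈ V with either (d(a,c) ≤ 2 and i(c,b) ≤ i(a,b) − 1) or (d(a,c) ≤ 1 and i(c,b) ≤ i(a,b) − 2), where i : V × V → ℕ is a symmetric function and d is the path metric on G, and suppose d(a,b) ≤ 1 whenever i(a,b) ≤ 1. Then d(a,b) ≤ 2·i(a,b) + 1 for all a, b ∈ V. -/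
/-- The surgery induction: if `d(a,b) ≤ 1` whenever `i(a,b) ≤ 1`, and from any `a, b` with
`i(a,b) ≥ 2` one can produce `c` with either `d(a,c) ≤ 2` and `i(c,b) ≤ i(a,b) - 1`, or
`d(a,c) ≤ 1` and `i(c,b) ≤ i(a,b) - 2`, then `d(a,b) ≤ 2·i(a,b) + 1` for all `a, b`. -/
theorem stmt_4 (V : Type*) (G : SimpleGraph V) (hG : G.Connected)
    (f : ℕ → ℝ) (hf0 : f 0 = 1) (hf1 : f 1 = 1)
    (i : V → V → ℕ) (hsymm : ∀ a b, i a b = i b a)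
    (hsmall : ∀ a b : V, i a b ≤ 1 → G.dist a b ≤ 1)
    (hsurg : ∀ a b : V, 2 ≤ i a b → ∃ c : V,
      (G.dist a c ≤ 2 ∧ i c b ≤ i a b - 1) ∨ (G.dist a c ≤ 1 ∧ i c b ≤ i a b - 2)) :
    ∀ a b : V, G.dist a b ≤ 2 * i a b + 1 := by
  suffices h : ∀ n, ∀ a b : V, i a b ≤ n → G.dist a b ≤ 2 * i a b + 1 by
    intro a b; exact h (i a b) a b le_rfl
  intro n
  induction n with
  | zero => intro a b hab; have := hsmall a b (by omega); omega
  | succ n ih =>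
    intro a b hab
    by_cases h1 : i a b ≤ 1
    · have := hsmall a b h1; omega
    · obtain ⟨c, hc⟩ := hsurg a b (by omega)
      have htri := hG.dist_triangle (u := a) (v := c) (w := b)
      rcases hc with ⟨h2, h3⟩ | ⟨h2, h3⟩
      · have := ih c b (by omega); omega
      · have := ih c b (by omega); omega
end

section
/- Let V be a set with a symmetric function i : V × V → ℕ and let G₁ be the graph on V with edges {a,b} when i(a,b) = 0, and G₂ the graph with edges when i(a,b) ≤ 2. Suppose the path metric d₁ of G₁ satisfies d₁(a,b) ≤ 2·i(a,b) + 1 for all a,b. Then for all a,b, d₂(a,b) ≤ d₁(a,b) ≤ 5·d₂(a,b), where d₂ is the path metric of G₂; hence G₁ and G₂ are quasi-isometric with uniform constants. -/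
/-- Let `i` be a symmetric function on pairs of vertices (intersection number), `G₁` the
graph with edges `i(a,b) = 0` and `G₂` the graph with edges `i(a,b) ≤ 2`.  If the path
metric `d₁` of `G₁` satisfies `d₁(a,b) ≤ 2·i(a,b) + 1`, then
`d₂(a,b) ≤ d₁(a,b) ≤ 5·d₂(a,b)`, so `G₁` and `G₂` are quasi-isometric with uniform
constants. -/
theorem stmt_8 (V : Type*) (i : V → V → ℕ) (hsymm : ∀ a b, i a b = i b a)
    (G₁ G₂ : SimpleGraph V)
    (hG₁ : ∀ a b : V, G₁.Adj a b ↔ a ≠ b ∧ i a b = 0)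
    (hG₂ : ∀ a b : V, G₂.Adj a b ↔ a ≠ b ∧ i a b ≤ 2)
    (hconn : G₁.Connected)
    (hsurg : ∀ a b : V, G₁.dist a b ≤ 2 * i a b + 1) :
    ∀ a b : V, G₂.dist a b ≤ G₁.dist a b ∧ G₁.dist a b ≤ 5 * G₂.dist a b := by
  have hle : G₁ ≤ G₂ := by
    intro a b hab
    rw [hG₁] at hab
    rw [hG₂]
    exact ⟨hab.1, hab.2 ▸ by omega⟩
  intro a b
  constructor
  · obtain ⟨p, hp⟩ := hconn.exists_walk_length_eq_dist a b
    calc G₂.dist a b ≤ (p.mapLe hle).length := SimpleGraph.dist_le _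
      _ = p.length := SimpleGraph.Walk.length_map _ _
      _ = G₁.dist a b := hp
  · have hreach : G₂.Reachable a b := (hconn a b).mono hle
    obtain ⟨p, hp⟩ := hreach.exists_walk_length_eq_dist
    rw [← hp]
    clear hp
    induction p with
    | nil => simp
    | cons h q ih =>
      rename_i u v w
      have h5 : G₁.dist u v ≤ 5 := by
        have := hsurg u v
        have : i u v ≤ 2 := ((hG₂ u v).mp h).2
        omega
      calc G₁.dist u w ≤ G₁.dist u v + G₁.dist v w := hconn.dist_triangle
        _ ≤ 5 + 5 * q.length := Nat.add_le_add h5 (ih ((hconn v w).mono hle))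
        _ = 5 * (q.cons h).length := by simp [Nat.mul_add]; ring
end
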